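/- arXiv:math/0608075 — 2 statements merged into one kernel-verified Lean document; each statement's English description precedes it below -/
import Mathlib

section
/- Let r : ℝ → ℝ be smooth with inf r > 0, r(x) = |x|·h(x) for |x| ≥ 1 where h(x) = 1 + O(x⁻²) and h⁽ᵏ⁾(x) = O(x⁻²⁻ᵏ) for k ≥ 1. Then the arclength function ξ(x) = ∫₀ˣ √(1 + r'(y)²) dy satisfies ξ(x) = √2·x + c_∞ + O(x⁻¹) as x → ∞ for some constant c_∞. -/
open MeasureTheory Real

/-- Lipschitz-type bound for `√(1+a²)` near `a = 1`. -/
lemma sqrt_one_add_sq_sub_sqrt_two_abs_le (a : ℝ) :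
    |Real.sqrt (1 + a ^ 2) - Real.sqrt 2| ≤ |a - 1| := by
  have h1 : Real.sqrt (1 + a ^ 2) ^ 2 = 1 + a ^ 2 := Real.sq_sqrt (by positivity)
  have h2 : Real.sqrt 2 ^ 2 = 2 := Real.sq_sqrt (by norm_num)
  have hst : 1 + a ≤ Real.sqrt (1 + a ^ 2) * Real.sqrt 2 := by
    rw [← Real.sqrt_mul (by positivity)]
    calc 1 + a ≤ |1 + a| := le_abs_self _
      _ = Real.sqrt ((1 + a) ^ 2) := (Real.sqrt_sq_eq_abs _).symm
      _ ≤ Real.sqrt ((1 + a ^ 2) * 2) :=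
          Real.sqrt_le_sqrt (by nlinarith [sq_nonneg (1 - a)])
  rw [← Real.sqrt_sq_eq_abs (a - 1), ← Real.sqrt_sq_eq_abs _]
  apply Real.sqrt_le_sqrt
  nlinarith

/-- arclength asymptotics `ξ(x) = √2 x + c_∞ + O(1/x)` for an
asymptotically conic profile `r`. -/
theorem arclength_asymptotics
    (r h : ℝ → ℝ)
    (hr_smooth : ContDiff ℝ (⊤ : ℕ∞) r)
    (hr_pos : ∃ ε > 0, ∀ x, ε ≤ r x)
    (hrh : ∀ x : ℝ, 1 ≤ |x| → r x = |x| * h x)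
    (hh0 : ∃ C : ℝ, ∀ x : ℝ, 1 ≤ |x| → |h x - 1| ≤ C / x ^ 2)
    (hhk : ∀ k : ℕ, 1 ≤ k → ∃ C : ℝ, ∀ x : ℝ, 1 ≤ |x| →
      |iteratedDeriv k h x| ≤ C / |x| ^ (2 + k)) :
    ∃ cinf C x₀ : ℝ, 0 < x₀ ∧ ∀ x : ℝ, x₀ ≤ x →
      |(∫ y in (0:ℝ)..x, Real.sqrt (1 + (deriv r y) ^ 2))
        - (Real.sqrt 2 * x + cinf)| ≤ C / x := by
  obtain ⟨C₀, hC₀⟩ := hh0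
  obtain ⟨C₁, hC₁⟩ := hhk 1 le_rfl
  set f : ℝ → ℝ := fun y => Real.sqrt (1 + (deriv r y) ^ 2) with hf
  set g : ℝ → ℝ := fun y => f y - Real.sqrt 2 with hg
  have hrdiff : Differentiable ℝ r := hr_smooth.differentiable (by simp)
  have hcontd : Continuous (deriv r) := hr_smooth.continuous_deriv (by simp)
  have hcontf : Continuous f := by
    apply Continuous.sqrt
    continuity
  have hcontg : Continuous g := hcontf.sub continuous_const
  -- derivative formula for y > 1
  have hderiv : ∀ y : ℝ, 1 < y → deriv r y = h y + y * deriv h y := by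
    intro y hy
    have hy0 : y ≠ 0 := by linarith
    have hhq : h =ᶠ[nhds y] fun x => r x / x := by
      filter_upwards [Ioi_mem_nhds hy] with x hx
      have hx0 : (0:ℝ) < x := lt_trans one_pos hx
      rw [hrh x (by rw [abs_of_pos hx0]; exact le_of_lt hx), abs_of_pos hx0]
      field_simp
    have hdr : HasDerivAt (fun x => r x / x) ((deriv r y * y - r y * 1) / y ^ 2) y :=
      (hrdiff y).hasDerivAt.div (hasDerivAt_id y) hy0
    have hdh : HasDerivAt h ((deriv r y * y - r y * 1) / y ^ 2) y :=
      hdr.congr_of_eventuallyEq hhq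
    have hrq : r =ᶠ[nhds y] fun x => x * h x := by
      filter_upwards [Ioi_mem_nhds hy] with x hx
      have hx0 : (0:ℝ) < x := lt_trans one_pos hx
      rw [hrh x (by rw [abs_of_pos hx0]; exact le_of_lt hx), abs_of_pos hx0]
    have hdr2 : HasDerivAt (fun x => x * h x)
        (1 * h y + y * ((deriv r y * y - r y * 1) / y ^ 2)) y :=
      (hasDerivAt_id y).mul hdh
    have := (hdr2.congr_of_eventuallyEq hrq).deriv
    rw [this, hdh.deriv]
    ring
  -- bound on g for y ≥ 2
  set C' : ℝ := C₀ + C₁ with hC'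
  have hgb : ∀ y : ℝ, 2 ≤ y → |g y| ≤ C' / y ^ 2 := by
    intro y hy
    have hy1 : 1 < y := by linarith
    have hy0 : (0:ℝ) < y := by linarith
    have hay : 1 ≤ |y| := by rw [abs_of_pos hy0]; linarith
    have h1 : |deriv r y - 1| ≤ C' / y ^ 2 := by
      rw [hderiv y hy1]
      have e1 : h y + y * deriv h y - 1 = (h y - 1) + y * deriv h y := by ring
      rw [e1]
      have b1 := hC₀ y hay
      have b2 := hC₁ y hay
      rw [iteratedDeriv_one] at b2
      have b3 : |y * deriv h y| ≤ C₁ / y ^ 2 := by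
        rw [abs_mul, abs_of_pos hy0]
        have : y * |deriv h y| ≤ y * (C₁ / |y| ^ (2 + 1)) :=
          mul_le_mul_of_nonneg_left b2 (le_of_lt hy0)
        refine le_trans this (le_of_eq ?_)
        rw [abs_of_pos hy0]
        field_simp
        ring
      calc |(h y - 1) + y * deriv h y| ≤ |h y - 1| + |y * deriv h y| := abs_add_le _ _
        _ ≤ C₀ / y ^ 2 + C₁ / y ^ 2 := add_le_add b1 b3
        _ = C' / y ^ 2 := by rw [hC']; ring
    calc |g y| ≤ |deriv r y - 1| := sqrt_one_add_sq_sub_sqrt_two_abs_le _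
      _ ≤ C' / y ^ 2 := h1
  -- positivity of C'
  have hC'pos : 0 ≤ C' / 4 := le_trans (abs_nonneg _) (hgb 2 le_rfl |>.trans_eq (by norm_num))
  have hC'nonneg : 0 ≤ C' := by linarith
  -- rpow facts
  have hrpow : ∀ y : ℝ, 0 < y → y ^ (-2 : ℝ) = (y ^ 2)⁻¹ := by
    intro y hy
    rw [Real.rpow_neg hy.le, ← Real.rpow_natCast y 2]
    norm_num
  -- integrability of the majorant
  have hmaj : IntegrableOn (fun y : ℝ => C' * y ^ (-2 : ℝ)) (Set.Ioi 2) volume :=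
    (integrableOn_Ioi_rpow_of_lt (by norm_num) (by norm_num : (0:ℝ) < 2)).const_mul C'
  have hintg : IntegrableOn g (Set.Ioi 2) volume := by
    apply Integrable.mono' hmaj (hcontg.aestronglyMeasurable.restrict)
    refine (ae_restrict_iff' measurableSet_Ioi).2 (Filter.Eventually.of_forall ?_)
    intro y hy
    have hy2 : (2:ℝ) ≤ y := le_of_lt hy
    have hy0 : (0:ℝ) < y := by linarith
    rw [Real.norm_eq_abs]
    calc |g y| ≤ C' / y ^ 2 := hgb y hy2
      _ = C' * y ^ (-2:ℝ) := by rw [hrpow y hy0, div_eq_mul_inv]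
  set I : ℝ := ∫ y in Set.Ioi (2:ℝ), g y with hI
  refine ⟨(∫ y in (0:ℝ)..2, f y) - 2 * Real.sqrt 2 + I, C', 2, by norm_num, ?_⟩
  intro x hx
  have hx0 : (0:ℝ) < x := by linarith
  -- tail integrability
  have hintt : IntegrableOn g (Set.Ioi x) volume :=
    hintg.mono_set (Set.Ioi_subset_Ioi hx)
  have hintc : IntegrableOn g (Set.Ioc 2 x) volume :=
    hintg.mono_set Set.Ioc_subset_Ioi_self
  -- split the improper integral
  have hsplit : I = (∫ y in Set.Ioc 2 x, g y) + ∫ y in Set.Ioi x, g y := by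
    rw [hI, ← Set.Ioc_union_Ioi_eq_Ioi hx,
      MeasureTheory.setIntegral_union (Set.Ioc_disjoint_Ioi le_rfl) measurableSet_Ioi
        hintc hintt]
  -- interval integral identities
  have hii : ∀ a b : ℝ, IntervalIntegrable f volume a b := fun a b =>
    hcontf.intervalIntegrable a b
  have hgi : ∀ a b : ℝ, IntervalIntegrable g volume a b := fun a b =>
    hcontg.intervalIntegrable a b
  have hadd : (∫ y in (0:ℝ)..x, f y)
      = (∫ y in (0:ℝ)..2, f y) + ∫ y in (2:ℝ)..x, f y :=
    (intervalIntegral.integral_add_adjacent_intervals (hii 0 2) (hii 2 x)).symm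
  have hfg : (∫ y in (2:ℝ)..x, f y)
      = (∫ y in (2:ℝ)..x, g y) + Real.sqrt 2 * (x - 2) := by
    have : (∫ y in (2:ℝ)..x, f y) - (∫ y in (2:ℝ)..x, (Real.sqrt 2 : ℝ))
        = ∫ y in (2:ℝ)..x, g y := by
      rw [← intervalIntegral.integral_sub (hii 2 x)
        (intervalIntegrable_const)]
    rw [intervalIntegral.integral_const, smul_eq_mul] at this
    linarith [this]
  have hioc : (∫ y in (2:ℝ)..x, g y) = ∫ y in Set.Ioc 2 x, g y :=
    intervalIntegral.integral_of_le hx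
  -- the key identity
  have hkey : (∫ y in (0:ℝ)..x, f y)
      - (Real.sqrt 2 * x + ((∫ y in (0:ℝ)..2, f y) - 2 * Real.sqrt 2 + I))
      = -(∫ y in Set.Ioi x, g y) := by
    rw [hadd, hfg, hioc, hsplit]; ring
  rw [hkey, abs_neg]
  -- final tail estimate
  have hb : ‖∫ y in Set.Ioi x, g y‖ ≤ ∫ y in Set.Ioi x, C' * y ^ (-2:ℝ) := by
    apply MeasureTheory.norm_integral_le_of_norm_le
      (hmaj.mono_set (Set.Ioi_subset_Ioi hx))
    refine (ae_restrict_iff' measurableSet_Ioi).2 (Filter.Eventually.of_forall ?_)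
    intro y hy
    have hy2 : (2:ℝ) ≤ y := le_trans hx (le_of_lt hy)
    have hy0 : (0:ℝ) < y := by linarith
    rw [Real.norm_eq_abs]
    calc |g y| ≤ C' / y ^ 2 := hgb y hy2
      _ = C' * y ^ (-2:ℝ) := by rw [hrpow y hy0, div_eq_mul_inv]
  have hval : (∫ y in Set.Ioi x, C' * y ^ (-2:ℝ)) = C' / x := by
    rw [MeasureTheory.integral_const_mul,
      integral_Ioi_rpow_of_lt (by norm_num) hx0]
    rw [show (-2:ℝ) + 1 = -1 by norm_num, Real.rpow_neg_one]
    field_simp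
  rw [Real.norm_eq_abs] at hb
  calc |∫ y in Set.Ioi x, g y| ≤ ∫ y in Set.Ioi x, C' * y ^ (-2:ℝ) := hb
    _ = C' / x := hval
end

section
/- For small λ > 0, the Wronskian W(λ) = W(f₊(·,λ), f₋(·,λ)) of the Jost solutions satisfies W(λ) = 2λ(1 + ic₃ + i(2/π)log λ) + O(λ^{3/2−ε}) and W'(λ) = 2(1 + ic₃ + i(2/π) + i(2/π)log λ) + O(λ^{1/2−ε}) for any ε > 0. -/
/-!
Write `A, B` for the leading terms of `a₊, b₊`. Because `c₀² c₁ = i` and `2^{1/4} 2^{-1/4} = 1`,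
the leading terms combine exactly: `-2AB = 2λ(1 + ic₃ + ic₁ log λ)` and
`-2(A'B + AB') = 2(1 + ic₃ + ic₁ + ic₁ log λ)`. The errors are controlled through
`ab - AB = (a - A)b + A(b - B)` by multiplying power bounds at `0⁺`, the factor `log λ` in `A`
costing only `λ^{-δ}`; the hypotheses taken at `ε/2` then give the exponents `3/2 - ε` and
`1/2 - ε`.
-/

open Real Complex Asymptotics Filter Topology

lemma rpow_isBigO_rpow_nhdsGT_zero {s t : ℝ} (h : t ≤ s) :
    (fun x : ℝ => x ^ s) =O[𝓝[>] 0] fun x => x ^ t :=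
  IsBigO.of_bound 1 <| by
    filter_upwards [Ioo_mem_nhdsGT one_pos] with x hx
    rw [norm_of_nonneg (rpow_nonneg hx.1.le _), norm_of_nonneg (rpow_nonneg hx.1.le _), one_mul]
    exact rpow_le_rpow_of_exponent_ge hx.1 hx.2.le h

lemma Asymptotics.IsBigO.mul_rpow_nhdsGT_zero {R : Type*} [SeminormedRing R] {f g : ℝ → R}
    {s t : ℝ} (hf : f =O[𝓝[>] 0] fun x => x ^ s) (hg : g =O[𝓝[>] 0] fun x => x ^ t) :
    (fun x => f x * g x) =O[𝓝[>] 0] fun x => x ^ (s + t) :=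
  (hf.mul hg).congr' .rfl <| eventually_mem_nhdsWithin.mono fun _ hx => (rpow_add hx s t).symm

lemma eventually_nhdsGT_zero_iff {p : ℝ → Prop} :
    (∀ᶠ x in 𝓝[>] 0, p x) ↔ ∃ x₀, 0 < x₀ ∧ ∀ x, 0 < x → x < x₀ → p x := by
  simp only [Filter.Eventually, mem_nhdsGT_iff_exists_Ioo_subset, Set.mem_Ioi, Set.subset_def,
    Set.mem_Ioo, Set.mem_ofPred_eq, and_imp]

lemma isBigO_rpow_nhdsGT_zero_iff {E : Type*} [SeminormedAddCommGroup E] {f : ℝ → E} {s : ℝ} :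
    (f =O[𝓝[>] 0] fun x => x ^ s) ↔ ∃ C, ∀ᶠ x in 𝓝[>] 0, ‖f x‖ ≤ C * x ^ s :=
  isBigO_iff.trans <| exists_congr fun _ => eventually_congr <|
    eventually_mem_nhdsWithin.mono fun x hx => by rw [norm_of_nonneg (rpow_nonneg hx.out.le s)]

lemma isBigO_rpow_and_isBigO_rpow_nhdsGT_zero_iff {E F : Type*} [SeminormedAddCommGroup E]
    [SeminormedAddCommGroup F] {f : ℝ → E} {g : ℝ → F} {s t : ℝ} :
    ((f =O[𝓝[>] 0] fun x => x ^ s) ∧ g =O[𝓝[>] 0] fun x => x ^ t) ↔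
      ∃ C x₀ : ℝ, 0 < x₀ ∧ ∀ x, 0 < x → x < x₀ → ‖f x‖ ≤ C * x ^ s ∧ ‖g x‖ ≤ C * x ^ t := by
  simp only [isBigO_rpow_nhdsGT_zero_iff, ← eventually_nhdsGT_zero_iff]
  constructor
  · rintro ⟨⟨C₁, h₁⟩, ⟨C₂, h₂⟩⟩
    refine ⟨max C₁ C₂, ?_⟩
    filter_upwards [h₁, h₂, self_mem_nhdsWithin] with x hx₁ hx₂ (hx : 0 < x)
    exact ⟨hx₁.trans (by gcongr; exact le_max_left _ _),
      hx₂.trans (by gcongr; exact le_max_right _ _)⟩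
  · rintro ⟨C, h⟩
    exact ⟨⟨C, h.mono fun _ => And.left⟩, ⟨C, h.mono fun _ => And.right⟩⟩

lemma isBigO_mul_sub_mul_rpow_nhdsGT_zero {R : Type*} [SeminormedRing R] {f F g G : ℝ → R}
    {s t p q r : ℝ} (hf : (fun x => f x - F x) =O[𝓝[>] 0] fun x => x ^ s)
    (hg : g =O[𝓝[>] 0] fun x => x ^ q) (hF : F =O[𝓝[>] 0] fun x => x ^ p)
    (hG : (fun x => g x - G x) =O[𝓝[>] 0] fun x => x ^ t) (hr₁ : r ≤ s + q) (hr₂ : r ≤ p + t) :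
    (fun x => f x * g x - F x * G x) =O[𝓝[>] 0] fun x => x ^ r :=
  (((hf.mul_rpow_nhdsGT_zero hg).trans (rpow_isBigO_rpow_nhdsGT_zero hr₁)).add
    ((hF.mul_rpow_nhdsGT_zero hG).trans (rpow_isBigO_rpow_nhdsGT_zero hr₂))).congr_left
    fun x => by noncomm_ring

lemma Asymptotics.IsBigO.of_sub {α E : Type*} [SeminormedAddCommGroup E] {l : Filter α}
    {g G : α → E} {u : α → ℝ} (h : (fun x => g x - G x) =O[l] u) (hG : G =O[l] u) :
    g =O[l] u :=
  (h.add hG).congr_left fun _ => sub_add_cancel _ _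

lemma const_add_const_mul_log_isBigO_rpow_nhdsGT_zero (c d : ℂ) {δ : ℝ} (hδ : 0 < δ) :
    (fun x : ℝ => c + d * Real.log x) =O[𝓝[>] 0] fun x => x ^ (-δ) := by
  have hc : (fun _ : ℝ => c) =O[𝓝[>] 0] fun x => x ^ (-δ) :=
    (isBigO_const_one ℝ c _).trans
      ((rpow_isBigO_rpow_nhdsGT_zero (neg_nonpos.2 hδ.le)).congr_left rpow_zero)
  have hlog : (fun x : ℝ => (Real.log x : ℂ)) =O[𝓝[>] 0] fun x => x ^ (-δ) :=
    isBigO_ofReal_left.2 (isLittleO_log_rpow_nhdsGT_zero (neg_lt_zero.2 hδ)).isBigO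
  exact hc.add (hlog.const_mul_left d)

lemma ofReal_sqrt_isBigO_rpow_nhdsGT_zero :
    (fun x : ℝ => (√x : ℂ)) =O[𝓝[>] 0] fun x => x ^ (1/2 : ℝ) :=
  isBigO_ofReal_left.2 <| (isBigO_refl _ _).congr_left fun x => (Real.sqrt_eq_rpow x).symm

lemma ofReal_inv_sqrt_isBigO_rpow_nhdsGT_zero :
    (fun x : ℝ => (((√x)⁻¹ : ℝ) : ℂ)) =O[𝓝[>] 0] fun x => x ^ (-(1/2) : ℝ) :=
  isBigO_ofReal_left.2 <| (isBigO_refl _ _).congr' .rfl <|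
    eventually_mem_nhdsWithin.mono fun x hx => by simp only [Real.sqrt_eq_rpow, rpow_neg hx.out.le]

noncomputable def jostC₀ : ℂ := √(π/2) * Complex.exp (I * π / 4)

lemma two_rpow_mul_two_rpow_mul_jostC₀_sq_mul :
    (((2:ℝ) ^ ((1:ℝ)/4) : ℝ) : ℂ) * ((2:ℝ) ^ (-(1:ℝ)/4) : ℝ) * jostC₀ ^ 2 * (2/π) = I := by
  have h2 : (((2:ℝ) ^ ((1:ℝ)/4) : ℝ) : ℂ) * ((2:ℝ) ^ (-(1:ℝ)/4) : ℝ) = 1 := by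
    rw [← ofReal_mul, ← rpow_add two_pos]; norm_num
  have hexp : Complex.exp (I * π / 4) ^ 2 = I := by
    calc _ = Complex.exp (π / 2 * I) := by rw [← Complex.exp_nat_mul]; push_cast; ring_nf
      _ = I := exp_pi_div_two_mul_I
  have hsqrt : ((√(π/2) : ℝ) : ℂ) ^ 2 = π / 2 := by
    rw [← ofReal_pow, sq_sqrt (by positivity)]; push_cast; ring
  rw [h2, jostC₀, mul_pow, hexp, hsqrt]
  field_simp

section LeadingTerms

variable (c₃ : ℝ)

-- The leading terms of `a₊`, `b₊`, `a₊'`, `b₊'` as `λ → 0⁺`, with `c₁ = 2/π`.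
noncomputable def leadA (x : ℝ) : ℂ :=
  ((2:ℝ) ^ ((1:ℝ)/4) : ℝ) * jostC₀ * √x * (1 + I * (2/π) * Real.log x + I * c₃)

noncomputable def leadB (x : ℝ) : ℂ :=
  I * ((2:ℝ) ^ (-(1:ℝ)/4) : ℝ) * jostC₀ * (2/π) * √x

noncomputable def leadA' (x : ℝ) : ℂ :=
  (1/2) * ((2:ℝ) ^ ((1:ℝ)/4) : ℝ) * jostC₀ * (√x)⁻¹ *
    (1 + I * c₃ + 2 * I * (2/π) + I * (2/π) * Real.log x)

noncomputable def leadB' (x : ℝ) : ℂ :=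
  I / 2 * ((2:ℝ) ^ (-(1:ℝ)/4) : ℝ) * jostC₀ * (2/π) * (√x)⁻¹

lemma leadA_mul_leadB {x : ℝ} (hx : 0 ≤ x) :
    leadA c₃ x * leadB x = -(x * (1 + I * c₃ + I * (2/π) * Real.log x)) := by
  have hs : (√x : ℂ) ^ 2 = x := by rw [← ofReal_pow, sq_sqrt hx]
  unfold leadA leadB
  set P : ℂ := 1 + I * (2/π) * Real.log x + I * c₃
  linear_combination (I * (√x : ℂ) ^ 2 * P) * two_rpow_mul_two_rpow_mul_jostC₀_sq_mul +
    ((√x : ℂ) ^ 2 * P) * I_sq - P * hs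

lemma leadA'_mul_leadB_add_leadA_mul_leadB' {x : ℝ} (hx : 0 < x) :
    leadA' c₃ x * leadB x + leadA c₃ x * leadB' x =
      -(1 + I * c₃ + I * (2/π) + I * (2/π) * Real.log x) := by
  have hs : (√x : ℂ) * ((√x)⁻¹ : ℝ) = 1 := by
    rw [← ofReal_mul, mul_inv_cancel₀ (Real.sqrt_pos.2 hx).ne', ofReal_one]
  unfold leadA leadB leadA' leadB'
  set S : ℂ := (1 + I * c₃ + 2 * I * (2/π) + I * (2/π) * Real.log x) +
    (1 + I * (2/π) * Real.log x + I * c₃)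
  linear_combination (I / 2 * (√x : ℂ) * ((√x)⁻¹ : ℝ) * S) *
      two_rpow_mul_two_rpow_mul_jostC₀_sq_mul +
    ((√x : ℂ) * ((√x)⁻¹ : ℝ) * S / 2) * I_sq - S / 2 * hs

variable {c₃}

lemma leadA_isBigO {δ : ℝ} (hδ : 0 < δ) :
    leadA c₃ =O[𝓝[>] 0] fun x => x ^ (1/2 - δ) := by
  rw [sub_eq_add_neg]
  exact ((ofReal_sqrt_isBigO_rpow_nhdsGT_zero.mul_rpow_nhdsGT_zero
    (const_add_const_mul_log_isBigO_rpow_nhdsGT_zero (1 + I * c₃) (I * (2/π)) hδ)).const_mul_left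
      (((2:ℝ) ^ ((1:ℝ)/4) : ℝ) * jostC₀)).congr_left fun x => by unfold leadA; ring

lemma leadB_isBigO : leadB =O[𝓝[>] 0] fun x => x ^ (1/2 : ℝ) :=
  (ofReal_sqrt_isBigO_rpow_nhdsGT_zero.const_mul_left _).congr_left fun _ => rfl

lemma leadA'_isBigO {δ : ℝ} (hδ : 0 < δ) :
    leadA' c₃ =O[𝓝[>] 0] fun x => x ^ (-(1/2) - δ) := by
  rw [sub_eq_add_neg]
  exact ((ofReal_inv_sqrt_isBigO_rpow_nhdsGT_zero.mul_rpow_nhdsGT_zero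
    (const_add_const_mul_log_isBigO_rpow_nhdsGT_zero (1 + I * c₃ + 2 * I * (2/π))
      (I * (2/π)) hδ)).const_mul_left
      ((1/2) * ((2:ℝ) ^ ((1:ℝ)/4) : ℝ) * jostC₀)).congr_left fun x => by unfold leadA'; ring

lemma leadB'_isBigO : leadB' =O[𝓝[>] 0] fun x => x ^ (-(1/2) : ℝ) :=
  (ofReal_inv_sqrt_isBigO_rpow_nhdsGT_zero.const_mul_left _).congr_left fun _ => rfl

end LeadingTerms

/-- small-`λ` expansion of the Wronskian `W(λ) = -2a₊(λ)b₊(λ)`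
of the Jost solutions:
`W(λ) = 2λ(1 + ic₃ + i(2/π) log λ) + O(λ^{3/2-ε})` and
`W'(λ) = 2(1 + ic₃ + i(2/π) + i(2/π) log λ) + O(λ^{1/2-ε})`, for any `ε > 0`.
The context facts — `W = -2a₊b₊` and the small-`λ` expansions of `a₊, b₊` and
their derivatives (with `c₀ = √(π/2)e^{iπ/4}`, `c₁ = 2/π`) — are hypotheses. -/
theorem wronskian_small_energy_expansion
    (a b W : ℝ → ℂ) (c₃ : ℝ)
    (hW : ∀ lam : ℝ, W lam = -2 * a lam * b lam)
    (hdiff : ∀ lam : ℝ, 0 < lam → DifferentiableAt ℝ a lam ∧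
      DifferentiableAt ℝ b lam)
    (ha : ∀ ε : ℝ, 0 < ε → ∃ C lam₀ : ℝ, 0 < lam₀ ∧
      ∀ lam : ℝ, 0 < lam → lam < lam₀ →
        ‖a lam - ((2:ℝ) ^ ((1:ℝ)/4) : ℝ) *
            (Real.sqrt (Real.pi/2) * Complex.exp (Complex.I * Real.pi / 4)) *
            Real.sqrt lam *
            (1 + Complex.I * (2/Real.pi) * Real.log lam + Complex.I * c₃)‖
          ≤ C * lam ^ (1 - ε)
        ∧ ‖b lam - Complex.I * ((2:ℝ) ^ (-(1:ℝ)/4) : ℝ) *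
            (Real.sqrt (Real.pi/2) * Complex.exp (Complex.I * Real.pi / 4)) *
            (2/Real.pi) * Real.sqrt lam‖
          ≤ C * lam ^ (1 - ε))
    (ha' : ∀ ε : ℝ, 0 < ε → ∃ C lam₀ : ℝ, 0 < lam₀ ∧
      ∀ lam : ℝ, 0 < lam → lam < lam₀ →
        ‖deriv a lam - (1/2) * ((2:ℝ) ^ ((1:ℝ)/4) : ℝ) *
            (Real.sqrt (Real.pi/2) * Complex.exp (Complex.I * Real.pi / 4)) *
            (Real.sqrt lam)⁻¹ *
            (1 + Complex.I * c₃ + 2 * Complex.I * (2/Real.pi)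
              + Complex.I * (2/Real.pi) * Real.log lam)‖
          ≤ C * lam ^ (-ε)
        ∧ ‖deriv b lam - Complex.I / 2 * ((2:ℝ) ^ (-(1:ℝ)/4) : ℝ) *
            (Real.sqrt (Real.pi/2) * Complex.exp (Complex.I * Real.pi / 4)) *
            (2/Real.pi) * (Real.sqrt lam)⁻¹‖
          ≤ C * lam ^ (-ε)) :
    ∀ ε : ℝ, 0 < ε → ∃ C lam₀ : ℝ, 0 < lam₀ ∧
      ∀ lam : ℝ, 0 < lam → lam < lam₀ →
        ‖W lam - 2 * lam *
            (1 + Complex.I * c₃ + Complex.I * (2/Real.pi) * Real.log lam)‖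
          ≤ C * lam ^ ((3:ℝ)/2 - ε)
        ∧ ‖deriv W lam - 2 *
            (1 + Complex.I * c₃ + Complex.I * (2/Real.pi)
              + Complex.I * (2/Real.pi) * Real.log lam)‖
          ≤ C * lam ^ ((1:ℝ)/2 - ε) := by
  have hab (δ : ℝ) (hδ : 0 < δ) :
      ((fun x => a x - leadA c₃ x) =O[𝓝[>] 0] fun x => x ^ (1 - δ)) ∧
        (fun x => b x - leadB x) =O[𝓝[>] 0] fun x => x ^ (1 - δ) :=
    isBigO_rpow_and_isBigO_rpow_nhdsGT_zero_iff.2 (ha δ hδ)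
  have hab' (δ : ℝ) (hδ : 0 < δ) :
      ((fun x => deriv a x - leadA' c₃ x) =O[𝓝[>] 0] fun x => x ^ (-δ)) ∧
        (fun x => deriv b x - leadB' x) =O[𝓝[>] 0] fun x => x ^ (-δ) :=
    isBigO_rpow_and_isBigO_rpow_nhdsGT_zero_iff.2 (ha' δ hδ)
  have hb : b =O[𝓝[>] 0] fun x => x ^ (1/2 : ℝ) :=
    ((hab _ one_half_pos).2.trans (rpow_isBigO_rpow_nhdsGT_zero (by norm_num))).of_sub
      leadB_isBigO
  have hb' : deriv b =O[𝓝[>] 0] fun x => x ^ (-(1/2) : ℝ) :=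
    (hab' _ one_half_pos).2.of_sub leadB'_isBigO
  have hW' : ∀ x, 0 < x → deriv W x = -2 * (deriv a x * b x + a x * deriv b x) := fun x hx => by
    obtain ⟨hax, hbx⟩ := hdiff x hx
    rw [show W = fun x => -2 * (a x * b x) from funext fun x => (hW x).trans (mul_assoc _ _ _),
      deriv_const_mul _ (hax.fun_mul hbx), deriv_fun_mul hax hbx]
  intro ε hε
  have hε₂ : 0 < ε / 2 := half_pos hε
  obtain ⟨hA, hB⟩ := hab _ hε₂
  obtain ⟨hA', hB'⟩ := hab' _ hε₂
  refine isBigO_rpow_and_isBigO_rpow_nhdsGT_zero_iff.1 ⟨?_, ?_⟩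
  · have hab_sub := isBigO_mul_sub_mul_rpow_nhdsGT_zero (r := 3/2 - ε) hA hb (leadA_isBigO hε₂) hB
      (by linarith) (by linarith)
    refine (hab_sub.const_mul_left (-2)).congr' ?_ .rfl
    filter_upwards [self_mem_nhdsWithin] with x (hx : 0 < x)
    rw [hW]
    linear_combination 2 * leadA_mul_leadB c₃ hx.le
  · have ha'b_sub := isBigO_mul_sub_mul_rpow_nhdsGT_zero (r := 1/2 - ε) hA' hb
      (leadA'_isBigO hε₂) hB (by linarith) (by linarith)
    have hab'_sub := isBigO_mul_sub_mul_rpow_nhdsGT_zero (r := 1/2 - ε) hA hb'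
      (leadA_isBigO hε₂) hB' (by linarith) (by linarith)
    refine ((ha'b_sub.add hab'_sub).const_mul_left (-2)).congr' ?_ .rfl
    filter_upwards [self_mem_nhdsWithin] with x (hx : 0 < x)
    rw [hW' x hx]
    linear_combination 2 * leadA'_mul_leadB_add_leadA_mul_leadB' c₃ hx
end
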